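/- Let D be a Dirac operator on a Clifford module E over a Riemannian manifold and V a vector field with dual 1-form V*. Then c(V)∘D + D∘c(V) = -2∇_V - div(V) + c(d(V*)), where c denotes Clifford multiplication, ∇ the Clifford connection, and c(d(V*)) the Clifford action of the 2-form d(V*). -/

import Mathlib

/- STATEMENT 12: c(V)∘D + D∘c(V) = -2∇_V - div(V) + c(d(V*)) for a Dirac operator
D = ∑_j c(e_j)∇_j on a Clifford module.  Formalized in a local orthonormal frame
(flat model on ℝⁿ with trivialized Clifford module F): the c j are Clifford
multiplications by the frame covectors (c_j c_k + c_k c_j = -2δ_{jk}),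
D u = ∑_k c_k ∂_k u, ∇_V u = du(V), div V = ∑_j ∂_j V_j, and
c(d(V*)) = ∑_{j≠k} (∂_k V_j) c_k c_j. -/
theorem clifford_anticommutator_dirac (n : ℕ) (F : Type*)
    [NormedAddCommGroup F] [NormedSpace ℝ F]
    (c : Fin n → (F →L[ℝ] F))
    (hc : ∀ j k, (c j).comp (c k) + (c k).comp (c j) =
      if j = k then (-2 : ℝ) • ContinuousLinearMap.id ℝ F else 0)
    (V : (Fin n → ℝ) → (Fin n → ℝ)) (hV : ContDiff ℝ (⊤ : ℕ∞) V)
    (u : (Fin n → ℝ) → F) (hu : ContDiff ℝ (⊤ : ℕ∞) u) :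
    ∀ x : Fin n → ℝ,
      (∑ j, V x j • c j (∑ k, c k (fderiv ℝ u x (Pi.single k 1))))
        + (∑ k, c k (fderiv ℝ (fun y => ∑ j, V y j • c j (u y)) x (Pi.single k 1)))
      = (-2 : ℝ) • fderiv ℝ u x (V x)
        - (∑ j, fderiv ℝ V x (Pi.single j 1) j) • u x
        + ∑ j, ∑ k, if j ≠ k then fderiv ℝ V x (Pi.single k 1) j • c k (c j (u x)) else 0 := by
  intro x
  -- pointwise Clifford relations
  have hc' : ∀ j k v, c j (c k v) + c k (c j v) = if j = k then (-2 : ℝ) • v else 0 := by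
    intro j k v
    have h := congrArg (fun (T : F →L[ℝ] F) => T v) (hc j k)
    simp only [ContinuousLinearMap.add_apply, ContinuousLinearMap.comp_apply] at h
    by_cases hjk : j = k
    · simpa [hjk] using h
    · simpa [hjk] using h
  have hcc : ∀ j v, c j (c j v) = -v := by
    intro j v
    have h := hc' j j v
    rw [if_pos rfl] at h
    have h2 : (2 : ℝ) • c j (c j v) = (2 : ℝ) • (-v) := by
      rw [two_smul]; rw [h]; module
    exact smul_right_injective F two_ne_zero h2
  -- differentiability
  have hVd : DifferentiableAt ℝ V x := hV.differentiable (by simp) x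
  have hud : DifferentiableAt ℝ u x := hu.differentiable (by simp) x
  -- compute the derivative of y ↦ ∑ j, V y j • c j (u y)
  have hterm : ∀ j : Fin n, HasFDerivAt (fun y => V y j • c j (u y))
      ((V x j) • ((c j).comp (fderiv ℝ u x))
        + (((ContinuousLinearMap.proj j : (Fin n → ℝ) →L[ℝ] ℝ).comp
            (fderiv ℝ V x)).smulRight (c j (u x)))) x := by
    intro j
    have h1 : HasFDerivAt (fun y => V y j)
        ((ContinuousLinearMap.proj j : (Fin n → ℝ) →L[ℝ] ℝ).comp (fderiv ℝ V x)) x :=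
      (ContinuousLinearMap.proj j : (Fin n → ℝ) →L[ℝ] ℝ).hasFDerivAt.comp x hVd.hasFDerivAt
    have h2 : HasFDerivAt (fun y => c j (u y)) ((c j).comp (fderiv ℝ u x)) x :=
      (c j).hasFDerivAt.comp x hud.hasFDerivAt
    exact h1.smul h2
  have hsum : HasFDerivAt (fun y => ∑ j, V y j • c j (u y))
      (∑ j, ((V x j) • ((c j).comp (fderiv ℝ u x))
        + (((ContinuousLinearMap.proj j : (Fin n → ℝ) →L[ℝ] ℝ).comp
            (fderiv ℝ V x)).smulRight (c j (u x))))) x :=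
    HasFDerivAt.fun_sum (fun j _ => hterm j)
  have hder : ∀ k : Fin n,
      fderiv ℝ (fun y => ∑ j, V y j • c j (u y)) x (Pi.single k 1)
      = ∑ j, (V x j • c j (fderiv ℝ u x (Pi.single k 1))
          + fderiv ℝ V x (Pi.single k 1) j • c j (u x)) := by
    intro k
    rw [hsum.fderiv]
    simp [ContinuousLinearMap.sum_apply, ContinuousLinearMap.comp_apply,
      ContinuousLinearMap.smulRight_apply, ContinuousLinearMap.proj_apply]
  -- abbreviations
  set d : Fin n → F := fun k => fderiv ℝ u x (Pi.single k 1) with hd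
  -- rewrite the second big sum
  have hD : (∑ k, c k (fderiv ℝ (fun y => ∑ j, V y j • c j (u y)) x (Pi.single k 1)))
      = ∑ k, ∑ j, (V x j • c k (c j (d k))
          + fderiv ℝ V x (Pi.single k 1) j • c k (c j (u x))) := by
    refine Finset.sum_congr rfl fun k _ => ?_
    rw [hder k, map_sum]
    refine Finset.sum_congr rfl fun j _ => ?_
    rw [map_add, map_smul, map_smul]
  rw [hD]
  -- rewrite the first big sum
  have hA : (∑ j, V x j • c j (∑ k, c k (d k)))
      = ∑ j, ∑ k, V x j • c j (c k (d k)) := by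
    refine Finset.sum_congr rfl fun j _ => ?_
    rw [map_sum, Finset.smul_sum]
  rw [hA]
  -- split the second double sum
  rw [show (∑ k, ∑ j, (V x j • c k (c j (d k))
        + fderiv ℝ V x (Pi.single k 1) j • c k (c j (u x))))
      = (∑ k, ∑ j, V x j • c k (c j (d k)))
        + ∑ k, ∑ j, fderiv ℝ V x (Pi.single k 1) j • c k (c j (u x)) by
    rw [← Finset.sum_add_distrib]
    exact Finset.sum_congr rfl fun k _ => Finset.sum_add_distrib]
  -- combine first two double sums via the Clifford relations
  have key1 : (∑ j, ∑ k, V x j • c j (c k (d k)))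
      + (∑ k, ∑ j, V x j • c k (c j (d k)))
      = (-2 : ℝ) • fderiv ℝ u x (V x) := by
    rw [Finset.sum_comm (s := Finset.univ) (t := Finset.univ)
      (f := fun k j => V x j • c k (c j (d k)))]
    rw [← Finset.sum_add_distrib]
    have : ∀ j : Fin n, ((∑ k, V x j • c j (c k (d k))) + ∑ k, V x j • c k (c j (d k)))
        = V x j • ((-2 : ℝ) • d j) := by
      intro j
      rw [← Finset.sum_add_distrib]
      rw [show (∑ k, (V x j • c j (c k (d k)) + V x j • c k (c j (d k))))
          = ∑ k, V x j • (if j = k then (-2 : ℝ) • d k else 0) by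
        exact Finset.sum_congr rfl fun k _ => by rw [← smul_add, hc' j k (d k)]]
      simp
    rw [Finset.sum_congr rfl fun j _ => this j]
    have hx : fderiv ℝ u x (V x) = ∑ j, V x j • d j := by
      have hVx : V x = ∑ j, Pi.single j (V x j) := (Finset.univ_sum_single (V x)).symm
      conv_lhs => rw [hVx]
      rw [map_sum]
      refine Finset.sum_congr rfl fun j _ => ?_
      have hps : (Pi.single j (V x j) : Fin n → ℝ)
          = V x j • (Pi.single j (1 : ℝ) : Fin n → ℝ) := by
        funext i
        simp [Pi.single_apply, mul_ite]
      rw [hps, map_smul]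
    rw [hx, Finset.smul_sum]
    exact Finset.sum_congr rfl fun j _ => by rw [smul_comm]
  -- the remaining term: split diagonal and off-diagonal
  have key2 : (∑ k, ∑ j, fderiv ℝ V x (Pi.single k 1) j • c k (c j (u x)))
      = -((∑ j, fderiv ℝ V x (Pi.single j 1) j) • u x)
        + ∑ j, ∑ k, if j ≠ k then fderiv ℝ V x (Pi.single k 1) j • c k (c j (u x)) else 0 := by
    rw [Finset.sum_comm (s := Finset.univ) (t := Finset.univ)
      (f := fun j k => if j ≠ k then fderiv ℝ V x (Pi.single k 1) j • c k (c j (u x)) else 0)]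
    have hk : ∀ k : Fin n, (∑ j, fderiv ℝ V x (Pi.single k 1) j • c k (c j (u x)))
        = -(fderiv ℝ V x (Pi.single k 1) k • u x)
          + ∑ j, (if j ≠ k then fderiv ℝ V x (Pi.single k 1) j • c k (c j (u x)) else 0) := by
      intro k
      have hsplit : ∀ j : Fin n, fderiv ℝ V x (Pi.single k 1) j • c k (c j (u x))
          = (if j = k then -(fderiv ℝ V x (Pi.single k 1) j • u x) else 0)
            + (if j ≠ k then fderiv ℝ V x (Pi.single k 1) j • c k (c j (u x)) else 0) := by
        intro j
        by_cases h : j = k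
        · subst h; simp [hcc]
        · simp [h]
      rw [Finset.sum_congr rfl fun j _ => hsplit j, Finset.sum_add_distrib]
      congr 1
      simp
    rw [Finset.sum_congr rfl fun k _ => hk k, Finset.sum_add_distrib]
    congr 1
    rw [Finset.sum_neg_distrib, ← Finset.sum_smul]
  rw [← add_assoc, key1, key2]
  abel
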